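/- Let H be a Hilbert space with two inner products (·,·)_1 and (·,·)_2 inducing equivalent norms and satisfying |(u,v)_1 - (u,v)_2| ≤ ε ‖u‖_1 ‖v‖_1 for all u, v, with ε < 1/2. Let T_1, T_2 be bounded self-adjoint operators (with respect to the respective inner products) such that |(T_1 u, u)_1 - (T_2 u, u)_2| ≤ ε ‖u‖_1². Then for every m, the m-th min-max eigenvalue values satisfy |λ_m(T_1) - λ_m(T_2)| ≤ C ε, where C depends only on a bound for ‖T_1‖, ‖T_2‖ and the equivalence constants, and λ_m(T) = inf_{dim M = m} sup_{u ∈ M, u ≠ 0} (Tu,u)/(u,u). -/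

import Mathlib

open scoped RealInnerProductSpace

/-- The `m`-th min-max value of a Rayleigh-type functional `R`:
`inf` over `m`-dimensional subspaces `M` of `sup_{u ∈ M, u ≠ 0} R u`. -/
noncomputable def minmaxEig {H : Type*} [AddCommGroup H] [Module ℝ H]
    (R : H → ℝ) (m : ℕ) : ℝ :=
  ⨅ M : {M : Submodule ℝ H // Module.finrank ℝ M = m},
    ⨆ u : {u : H // u ∈ M.1 ∧ u ≠ 0}, R u.1

lemma minmax_le_aux {H : Type*} [AddCommGroup H] [Module ℝ H]
    (R₁ R₂ : H → ℝ) (δ B : ℝ) (hδ : 0 ≤ δ)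
    (hB1 : ∀ u : H, u ≠ 0 → |R₁ u| ≤ B)
    (hB2 : ∀ u : H, u ≠ 0 → |R₂ u| ≤ B)
    (h : ∀ u : H, u ≠ 0 → R₁ u ≤ R₂ u + δ) (m : ℕ) :
    minmaxEig R₁ m ≤ minmaxEig R₂ m + δ := by
  unfold minmaxEig
  set ι := {M : Submodule ℝ H // Module.finrank ℝ M = m}
  rcases isEmpty_or_nonempty ι with hι | hι
  · rw [Real.iInf_of_isEmpty, Real.iInf_of_isEmpty]; linarith
  · set f : ι → ℝ := fun M => ⨆ u : {u : H // u ∈ M.1 ∧ u ≠ 0}, R₁ u.1 with hf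
    set g : ι → ℝ := fun M => ⨆ u : {u : H // u ∈ M.1 ∧ u ≠ 0}, R₂ u.1 with hg
    have hbdd : BddBelow (Set.range f) := by
      refine ⟨min 0 (-B), ?_⟩
      rintro x ⟨N, rfl⟩
      rcases isEmpty_or_nonempty {u : H // u ∈ N.1 ∧ u ≠ 0} with he | hne
      · simp only [hf, Real.iSup_of_isEmpty]; exact min_le_left _ _
      · obtain ⟨u⟩ := hne
        have hbA : BddAbove (Set.range fun u : {u : H // u ∈ N.1 ∧ u ≠ 0} => R₁ u.1) := by
          refine ⟨B, ?_⟩; rintro x ⟨v, rfl⟩; exact (abs_le.1 (hB1 _ v.2.2)).2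
        have := le_ciSup hbA u
        have hlb : -B ≤ R₁ u.1 := (abs_le.1 (hB1 _ u.2.2)).1
        exact le_trans (min_le_right _ _) (le_trans hlb this)
    have key : ∀ N : ι, f N ≤ g N + δ := by
      intro N
      rcases isEmpty_or_nonempty {u : H // u ∈ N.1 ∧ u ≠ 0} with he | hne
      · simp only [hf, hg, Real.iSup_of_isEmpty]; linarith
      · apply ciSup_le
        intro u
        have hbA : BddAbove (Set.range fun u : {u : H // u ∈ N.1 ∧ u ≠ 0} => R₂ u.1) := by
          refine ⟨B, ?_⟩; rintro x ⟨v, rfl⟩; exact (abs_le.1 (hB2 _ v.2.2)).2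
        have := le_ciSup hbA u
        calc R₁ u.1 ≤ R₂ u.1 + δ := h _ u.2.2
          _ ≤ g N + δ := by linarith
    have : (⨅ N, f N) - δ ≤ ⨅ N, g N := by
      apply le_ciInf
      intro N
      have h1 : ⨅ N, f N ≤ f N := ciInf_le hbdd N
      linarith [key N]
    linarith


/-- Comparison of min-max eigenvalues of two self-adjoint operators with
respect to two equivalent inner products: if the inner products and the quadratic forms are
`ε`-close, the `m`-th min-max eigenvalues differ by at most `C ε`, with `C` depending only
on a bound `M` for the operator norms and the norm-equivalence constants. -/
theorem minmax_eigenvalue_comparison {H : Type*} [NormedAddCommGroup H]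
    [InnerProductSpace ℝ H] [CompleteSpace H] (M : ℝ) (hM : 0 < M) :
    ∃ C > 0, ∀ ε : ℝ, 0 < ε → ε < 1 / 2 →
      ∀ (ip2 : H → H → ℝ) (T₁ T₂ : H →L[ℝ] H),
        (∀ u v, ip2 u v = ip2 v u) →
        (∀ u v z, ip2 (u + v) z = ip2 u z + ip2 v z) →
        (∀ (c : ℝ) u v, ip2 (c • u) v = c * ip2 u v) →
        (∀ u, M⁻¹ * ‖u‖ ^ 2 ≤ ip2 u u ∧ ip2 u u ≤ M * ‖u‖ ^ 2) →
        (∀ u v, ⟪T₁ u, v⟫ = ⟪u, T₁ v⟫) →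
        (∀ u v, ip2 (T₂ u) v = ip2 u (T₂ v)) →
        ‖T₁‖ ≤ M → ‖T₂‖ ≤ M →
        (∀ u v, |⟪u, v⟫ - ip2 u v| ≤ ε * ‖u‖ * ‖v‖) →
        (∀ u, |⟪T₁ u, u⟫ - ip2 (T₂ u) u| ≤ ε * ‖u‖ ^ 2) →
        ∀ m : ℕ,
          |minmaxEig (fun u => ⟪T₁ u, u⟫ / ⟪u, u⟫) m -
            minmaxEig (fun u => ip2 (T₂ u) u / ip2 u u) m| ≤ C * ε := by
  refine ⟨M * (M + 1) + 1, by nlinarith, ?_⟩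
  set C := M * (M + 1) + 1 with hC
  have hCpos : 0 < C := by nlinarith
  intro ε hε hε2 ip2 T₁ T₂ hsym hadd hsmul hip hsa1 hsa2 hT1 hT2 hclose hq m
  set R₁ : H → ℝ := fun u => ⟪T₁ u, u⟫ / ⟪u, u⟫ with hR₁
  set R₂ : H → ℝ := fun u => ip2 (T₂ u) u / ip2 u u with hR₂
  -- pointwise comparison
  have hpt : ∀ u : H, u ≠ 0 → |R₁ u - R₂ u| ≤ C * ε := by
    intro u hu
    have hnu : 0 < ‖u‖ := norm_pos_iff.2 hu
    set b : ℝ := ‖u‖ ^ 2 with hbdef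
    have hb : 0 < b := by positivity
    set a : ℝ := ⟪T₁ u, u⟫ with hadef
    set a' : ℝ := ip2 (T₂ u) u with ha'def
    set b' : ℝ := ip2 u u with hb'def
    have hb'l : M⁻¹ * b ≤ b' := (hip u).1
    have hb' : 0 < b' := lt_of_lt_of_le (by positivity) hb'l
    have hbMb' : b ≤ M * b' := by
      have := mul_le_mul_of_nonneg_left hb'l hM.le
      rwa [← mul_assoc, mul_inv_cancel₀ hM.ne', one_mul] at this
    have haa' : |a - a'| ≤ ε * b := hq u
    have hbb' : |b - b'| ≤ ε * b := by
      have := hclose u u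
      rw [real_inner_self_eq_norm_sq u] at this
      calc |b - b'| ≤ ε * ‖u‖ * ‖u‖ := this
        _ = ε * b := by rw [hbdef]; ring
    have ha : |a| ≤ M * b := by
      have h1 : |a| ≤ ‖T₁ u‖ * ‖u‖ := abs_real_inner_le_norm _ _
      have h2 : ‖T₁ u‖ ≤ ‖T₁‖ * ‖u‖ := T₁.le_opNorm u
      have h3 : ‖T₁‖ * ‖u‖ ≤ M * ‖u‖ := mul_le_mul_of_nonneg_right hT1 hnu.le
      calc |a| ≤ ‖T₁ u‖ * ‖u‖ := h1
        _ ≤ M * ‖u‖ * ‖u‖ := by nlinarith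
        _ = M * b := by rw [hbdef]; ring
    have ha' : |a'| ≤ (M + 1) * b := by
      have := abs_sub_abs_le_abs_sub a' a
      rw [abs_sub_comm] at this
      nlinarith
    have hRform : R₁ u = a / b := by
      simp only [hR₁, real_inner_self_eq_norm_sq u]; rfl
    have hR₂form : R₂ u = a' / b' := rfl
    rw [hRform, hR₂form]
    have heq : a / b - a' / b' = ((a - a') * b' + a' * (b' - b)) / (b * b') := by
      field_simp; ring
    rw [heq, abs_div, abs_of_pos (mul_pos hb hb'), div_le_iff₀ (mul_pos hb hb')]
    have hnum : |(a - a') * b' + a' * (b' - b)| ≤ ε * b * b' + (M + 1) * b * (ε * b) := by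
      calc |(a - a') * b' + a' * (b' - b)| ≤ |(a - a') * b'| + |a' * (b' - b)| := abs_add_le _ _
        _ = |a - a'| * b' + |a'| * |b' - b| := by
            rw [abs_mul, abs_mul, abs_of_pos hb']
        _ ≤ ε * b * b' + (M + 1) * b * (ε * b) := by
            rw [abs_sub_comm b' b] at *
            have h1 : |a - a'| * b' ≤ ε * b * b' :=
              mul_le_mul_of_nonneg_right haa' hb'.le
            have h2 : |a'| * |b - b'| ≤ (M + 1) * b * (ε * b) := by
              apply mul_le_mul ha' hbb' (abs_nonneg _); nlinarith
            linarith
    refine le_trans hnum ?_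
    have hfin : (M + 1) * b * (ε * b) ≤ M * (M + 1) * ε * (b * b') := by
      nlinarith [mul_le_mul_of_nonneg_left hbMb' (by positivity : (0:ℝ) ≤ (M + 1) * ε * b)]
    rw [hC]; linarith [hfin]
  -- bounds
  have hB1 : ∀ u : H, u ≠ 0 → |R₁ u| ≤ M := by
    intro u hu
    have hnu : 0 < ‖u‖ := norm_pos_iff.2 hu
    have hb : (0:ℝ) < ‖u‖ ^ 2 := by positivity
    have ha : |⟪T₁ u, u⟫| ≤ M * ‖u‖ ^ 2 := by
      have h1 := abs_real_inner_le_norm (T₁ u) u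
      have h2 := T₁.le_opNorm u
      nlinarith
    have : R₁ u = ⟪T₁ u, u⟫ / ‖u‖ ^ 2 := by
      simp only [hR₁, real_inner_self_eq_norm_sq u]
    rw [this, abs_div, abs_of_pos hb, div_le_iff₀ hb]
    nlinarith
  have hB2 : ∀ u : H, u ≠ 0 → |R₂ u| ≤ M + C := by
    intro u hu
    have h1 := hpt u hu
    have h2 := hB1 u hu
    have h3 : C * ε ≤ C := by nlinarith
    have := abs_sub_abs_le_abs_sub (R₂ u) (R₁ u)
    rw [abs_sub_comm] at this
    linarith [abs_nonneg (R₁ u)]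
  rw [abs_sub_le_iff]
  have hδ : (0:ℝ) ≤ C * ε := by positivity
  constructor
  · have := minmax_le_aux R₁ R₂ (C * ε) (M + C) hδ (fun u hu => (hB1 u hu).trans (by linarith)) hB2
      (fun u hu => by linarith [(abs_le.1 (hpt u hu)).2]) m
    linarith
  · have := minmax_le_aux R₂ R₁ (C * ε) (M + C) hδ hB2 (fun u hu => (hB1 u hu).trans (by linarith))
      (fun u hu => by linarith [(abs_le.1 (hpt u hu)).1]) m
    linarith
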